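/- Let D be an n×n real matrix, λ a nonzero real number, α and β n×1 column vectors, and L an n×n matrix. If D β = λ j and D L + I = j α^T, then D is invertible and D^{-1} = -L + (1/λ) β α^T. -/

import Mathlib

open Matrix

theorem Matrix.mul_neg_add_inv_smul_vecMulVec_eq_one {ι K : Type*} [Fintype ι] [DecidableEq ι]
    [Field K] {D L : Matrix ι ι K} {c : K} (hc : c ≠ 0) {α β : ι → K}
    (hβ : D *ᵥ β = fun _ => c) (hL : D * L + 1 = vecMulVec (fun _ => 1) α) :
    D * (-L + c⁻¹ • vecMulVec β α) = 1 := by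
  have hβ' : D *ᵥ β = c • fun _ => 1 := by rw [hβ]; ext; simp
  rw [mul_add, mul_neg, mul_smul_comm, mul_vecMulVec, hβ', smul_vecMulVec, smul_smul,
    inv_mul_cancel₀ hc, one_smul, ← hL]
  abel

theorem stmt_1 {n : ℕ} (D L : Matrix (Fin n) (Fin n) ℝ) (lam : ℝ) (hlam : lam ≠ 0)
    (α β : Fin n → ℝ)
    (h1 : D.mulVec β = fun _ => lam)
    (h2 : D * L + 1 = vecMulVec (fun _ => 1) α) :
    IsUnit D.det ∧ D⁻¹ = -L + lam⁻¹ • vecMulVec β α := by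
  have hinv := mul_neg_add_inv_smul_vecMulVec_eq_one hlam h1 h2
  exact ⟨isUnit_det_of_right_inverse hinv, inv_eq_right_inv hinv⟩
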